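/- For any fixed reals c > 0 and s ≥ 0, the function t ↦ cosh(s)·cosh(t/2)·cosh(c−t/2) − sinh(t/2)·sinh(c−t/2) is strictly decreasing on the interval [0,c]; consequently, for fixed c > 0 the length ℓ_β(c,t) is strictly decreasing in t on [0,c]. -/

import Mathlib

/-! The identity `K cosh a cosh b - sinh a sinh b = (K-1)/2 · cosh (a+b) + (K+1)/2 · cosh (a-b)`
turns the expression, with `a + b = c` fixed, into a constant plus a positive multiple of
`cosh (t - c)`, which decreases in `t` up to `t = c`. The expression is moreover at least
`K = cosh s ≥ 1`, where `arcosh` is increasing. -/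

/-- Inverse hyperbolic cosine (for `x ≥ 1`). -/
noncomputable def arcosh (x : ℝ) : ℝ := Real.log (x + Real.sqrt (x ^ 2 - 1))

open Real hiding arcosh
open Set

lemma arcosh_eq_real_arcosh : arcosh = Real.arcosh := rfl

lemma mul_cosh_mul_cosh_sub_sinh_mul_sinh (K a b : ℝ) :
    K * cosh a * cosh b - sinh a * sinh b
      = (K - 1) / 2 * cosh (a + b) + (K + 1) / 2 * cosh (a - b) := by
  rw [cosh_add, cosh_sub]
  ring

lemma one_le_mul_cosh_mul_cosh_sub_sinh_mul_sinh {K : ℝ} (hK : 1 ≤ K) (a b : ℝ) :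
    1 ≤ K * cosh a * cosh b - sinh a * sinh b := by
  rw [mul_cosh_mul_cosh_sub_sinh_mul_sinh]
  have hsum := one_le_cosh (a + b)
  have hdiff := one_le_cosh (a - b)
  nlinarith

lemma strictAntiOn_mul_cosh_mul_cosh_sub_sinh_mul_sinh (c : ℝ) {K : ℝ} (hK : -1 < K) :
    StrictAntiOn (fun t => K * cosh (t / 2) * cosh (c - t / 2) - sinh (t / 2) * sinh (c - t / 2))
      (Iic c) := by
  intro x hx y hy hxy
  have hx : x ≤ c := hx
  have hy : y ≤ c := hy
  have hcosh : cosh (y / 2 - (c - y / 2)) < cosh (x / 2 - (c - x / 2)) := by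
    rw [cosh_lt_cosh, abs_of_nonpos (by linarith), abs_of_nonpos (by linarith)]
    linarith
  have hK' : 0 < (K + 1) / 2 := by linarith
  simp only [mul_cosh_mul_cosh_sub_sinh_mul_sinh, add_sub_cancel]
  gcongr

theorem beta_strictAnti_in_twist_general (c s : ℝ) :
    StrictAntiOn
      (fun t => Real.cosh s * Real.cosh (t / 2) * Real.cosh (c - t / 2)
        - Real.sinh (t / 2) * Real.sinh (c - t / 2)) (Set.Icc 0 c) ∧
    StrictAntiOn
      (fun t => 2 * arcosh (Real.cosh s * Real.cosh (t / 2) * Real.cosh (c - t / 2)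
        - Real.sinh (t / 2) * Real.sinh (c - t / 2))) (Set.Icc 0 c) := by
  have hK : 1 ≤ cosh s := one_le_cosh s
  have hanti : StrictAntiOn (fun t => cosh s * cosh (t / 2) * cosh (c - t / 2)
      - sinh (t / 2) * sinh (c - t / 2)) (Icc 0 c) :=
    (strictAntiOn_mul_cosh_mul_cosh_sub_sinh_mul_sinh c (by linarith)).mono Icc_subset_Iic_self
  refine ⟨hanti, ?_⟩
  have hmono : StrictMonoOn (fun x => 2 * arcosh x) (Ioi 0) := fun x hx y hy hxy => by
    simpa [arcosh_eq_real_arcosh] using strictMonoOn_arcosh hx hy hxy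
  refine hmono.comp_strictAntiOn hanti fun t _ => ?_
  exact zero_lt_one.trans_le (one_le_mul_cosh_mul_cosh_sub_sinh_mul_sinh hK _ _)

/-- For any fixed reals `c > 0` and `s ≥ 0`, the function
`t ↦ cosh(s)·cosh(t/2)·cosh(c−t/2) − sinh(t/2)·sinh(c−t/2)` is strictly decreasing on
the interval `[0,c]`; consequently, for fixed `c > 0` the length
`ℓ_β(c,t) = 2·arcosh(cosh(s)·cosh(t/2)·cosh(c−t/2) − sinh(t/2)·sinh(c−t/2))`
is strictly decreasing in `t` on `[0,c]`. -/
theorem beta_strictAnti_in_twist (c s : ℝ) (hc : 0 < c) (hs : 0 ≤ s) :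
    StrictAntiOn
      (fun t => Real.cosh s * Real.cosh (t / 2) * Real.cosh (c - t / 2)
        - Real.sinh (t / 2) * Real.sinh (c - t / 2)) (Set.Icc 0 c) ∧
    StrictAntiOn
      (fun t => 2 * arcosh (Real.cosh s * Real.cosh (t / 2) * Real.cosh (c - t / 2)
        - Real.sinh (t / 2) * Real.sinh (c - t / 2))) (Set.Icc 0 c) :=
  beta_strictAnti_in_twist_general c s
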